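/- arXiv:math/0701730 — 5 statements merged into one kernel-verified Lean document; each statement's English description precedes it below -/
import Mathlib

section
/- Let (R, 𝔪) be a commutative Noetherian local ring, M a finitely generated R-module, s a positive integer, and y_1, …, y_s elements of 𝔪 such that (y_1,…,y_s)^n M = ⋂_{(α_1,…,α_s) ∈ Λ_{s,n}} (y_1^{α_1},…,y_s^{α_s})M for all n ≥ 1. Then y_{i+1}^k M ∩ (y_1,…,y_i)^m M ⊆ (y_1,…,y_i,y_{i+1})^{k+m} M for all k, m ≥ 1 and all i < s. -/
open IsLocalRing

/-- The Krull dimension of a module, `dim M = dim R/ann M`. -/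
noncomputable def moduleDim (R : Type*) [CommRing R] (M : Type*) [AddCommGroup M]
    [Module R M] : WithBot ℕ∞ :=
  ringKrullDim (R ⧸ Module.annihilator R M)

/-- The length of a module, as the Krull dimension of its lattice of submodules. -/
noncomputable def moduleLength (R : Type*) [CommRing R] (M : Type*) [AddCommGroup M]
    [Module R M] : WithBot ℕ∞ :=
  Order.krullDim (Submodule R M)

/-- The depth of a module over a local ring: the supremum of lengths of `M`-regular
sequences consisting of elements of the maximal ideal. -/
noncomputable def moduleDepth (R : Type*) [CommRing R] [IsLocalRing R] (M : Type*)
    [AddCommGroup M] [Module R M] : ℕ∞ :=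
  sSup {n : ℕ∞ | ∃ rs : List R, (rs.length : ℕ∞) = n ∧ (∀ r ∈ rs, r ∈ maximalIdeal R) ∧
    RingTheory.Sequence.IsRegular M rs}

/-- A module over a Noetherian local ring is Cohen-Macaulay if its depth equals its
Krull dimension. -/
def IsCM (R : Type*) [CommRing R] [IsLocalRing R] (M : Type*) [AddCommGroup M]
    [Module R M] : Prop :=
  (moduleDepth R M : WithBot ℕ∞) = moduleDim R M

/-- The zeroth local cohomology `H^0_𝔪(M)`: the submodule of elements annihilated by
some power of the maximal ideal. -/
noncomputable def H0m (R : Type*) [CommRing R] [IsLocalRing R] (M : Type*) [AddCommGroup M]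
    [Module R M] : Submodule R M :=
  ⨆ n : ℕ, Submodule.torsionBySet R M ((maximalIdeal R ^ n : Ideal R) : Set R)

/-- `x : Fin d → R` is a system of parameters of `M` (where `d = dim M`):
all `x i` lie in the maximal ideal and `M/(x₁,…,x_d)M` has finite length. -/
def IsSOP (R : Type*) [CommRing R] [IsLocalRing R] (M : Type*) [AddCommGroup M] [Module R M]
    {d : ℕ} (x : Fin d → R) : Prop :=
  (∀ i, x i ∈ maximalIdeal R) ∧
    IsFiniteLength R (M ⧸ (Ideal.span (Set.range x) • (⊤ : Submodule R M)))

/-- `Λ_{s,n}`: tuples of positive integers of size `s` summing to `s + n - 1`. -/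
def Lambda (s n : ℕ) : Set (Fin s → ℕ) :=
  {α | (∀ i, 1 ≤ α i) ∧ (∑ i, α i) = s + n - 1}

/-- The sequence `x` has the property of parametric decomposition:
`q^n M = ⋂_{α ∈ Λ_{d,n}} (x₁^{α₁},…,x_d^{α_d})M` for all `n ≥ 1`, where `q = (x₁,…,x_d)`. -/
def HasParamDecomp (R : Type*) [CommRing R] (M : Type*) [AddCommGroup M] [Module R M]
    {d : ℕ} (x : Fin d → R) : Prop :=
  ∀ n : ℕ, 1 ≤ n →
    (Ideal.span (Set.range x)) ^ n • (⊤ : Submodule R M) =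
      ⨅ α ∈ Lambda d n, Ideal.span (Set.range fun i => x i ^ α i) • (⊤ : Submodule R M)

/-- `D : Fin (t+1) → Submodule R M` is the dimension filtration of `M`:
`D 0 = H^0_𝔪(M)`, `D t = M`, and each `D i` is the largest submodule of `D (i+1)` of
strictly smaller dimension. -/
def IsDimFiltration (R : Type*) [CommRing R] [IsLocalRing R] (M : Type*) [AddCommGroup M]
    [Module R M] {t : ℕ} (D : Fin (t + 1) → Submodule R M) : Prop :=
  D 0 = H0m R M ∧ D (Fin.last t) = ⊤ ∧
    ∀ i : Fin t,
      D i.castSucc ≤ D i.succ ∧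
      moduleDim R ↥(D i.castSucc) < moduleDim R ↥(D i.succ) ∧
      ∀ N : Submodule R M, N ≤ D i.succ →
        moduleDim R ↥N < moduleDim R ↥(D i.succ) → N ≤ D i.castSucc

/-- Given the dimension filtration `D` with `d_i = ds i`, a system of parameters
`x₁,…,x_d` is good if `D_i ∩ (x_{d_i+1},…,x_d)M = 0` for all `i < t`. -/
def IsGoodSOP (R : Type*) [CommRing R] [IsLocalRing R] (M : Type*) [AddCommGroup M]
    [Module R M] {d t : ℕ} (D : Fin (t + 1) → Submodule R M) (ds : Fin (t + 1) → ℕ)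
    (x : Fin d → R) : Prop :=
  IsSOP R M x ∧
    ∀ i : Fin (t + 1), (i : ℕ) < t →
      D i ⊓ (Ideal.span {r : R | ∃ j : Fin d, ds i ≤ (j : ℕ) ∧ r = x j}) •
        (⊤ : Submodule R M) = ⊥


/-!
Write `Q_r = (y₁, …, y_r)` and `P_{r,n} M` for the intersection of the `(y₁^{β₁}, …, y_r^{β_r}) M`
over `β ∈ Λ_{r,n}`. By pigeonhole `Q_r^n M ⊆ P_{r,n} M`, and `y_{r+1}^k M ∩ P_{r,m} M` lies in
`P_{r+1,m+k} M`, splitting on whether `β_{r+1} ≤ k`. So the theorem follows once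
`P_{r,n} M = Q_r^n M` for every `r ≤ s`, which for `r = s` is the hypothesis. Going down from
`r + 1` to `r`: by induction on `t`, every `z ∈ P_{r,n} M` lies in `Q_r^n M + y_{r+1}^t M`, as the
second summand falls into `P_{r+1,n+t} M = Q_{r+1}^{n+t} M ⊆ Q_r^n M + y_{r+1}^{t+1} M`. Krull's
intersection theorem then puts `z` in `Q_r^n M`.
-/

theorem Ideal.sup_pow_add_add_one_le {R : Type*} [CommSemiring R] (I J : Ideal R) (a b : ℕ) :
    (I ⊔ J) ^ (a + b + 1) ≤ I ^ (a + 1) ⊔ J ^ (b + 1) := by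
  rw [← Ideal.add_eq_sup, ← Ideal.add_eq_sup, add_pow, Ideal.sum_eq_sup]
  refine Finset.sup_le fun i _ => ?_
  by_cases hi : a + 1 ≤ i
  · exact Ideal.mul_le_left.trans (Ideal.mul_le_left.trans
      ((Ideal.pow_le_pow_right hi).trans le_sup_left))
  · exact Ideal.mul_le_left.trans (Ideal.mul_le_right.trans
      ((Ideal.pow_le_pow_right (by omega)).trans le_sup_right))

theorem Ideal.span_image_pow_sum_le {R ι : Type*} [CommSemiring R] [DecidableEq ι]
    (t : Finset ι) (f : ι → R) (γ : ι → ℕ) :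
    Ideal.span (f '' t) ^ (∑ j ∈ t, γ j + 1) ≤ Ideal.span ((fun j => f j ^ (γ j + 1)) '' t) := by
  induction t using Finset.induction_on with
  | empty => simp
  | insert a t ha ih =>
    simp only [Finset.coe_insert, Set.image_insert_eq, Ideal.span_insert, Finset.sum_insert ha,
      add_assoc]
    calc (Ideal.span {f a} ⊔ Ideal.span (f '' t)) ^ (γ a + (∑ j ∈ t, γ j + 1))
        ≤ Ideal.span {f a} ^ (γ a + 1) ⊔ Ideal.span (f '' t) ^ (∑ j ∈ t, γ j + 1) := by
          simpa only [add_assoc, add_comm 1] using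
            Ideal.sup_pow_add_add_one_le _ _ (γ a) (∑ j ∈ t, γ j)
      _ ≤ _ := by
          rw [Ideal.span_singleton_pow]
          exact sup_le_sup_left ih _

theorem Submodule.mem_of_forall_mem_sup_pow_smul {R M : Type*} [CommRing R] [IsNoetherianRing R]
    [IsLocalRing R] [AddCommGroup M] [Module R M] [Module.Finite R M] {I : Ideal R} (hI : I ≠ ⊤)
    {N : Submodule R M} {z : M} (h : ∀ t : ℕ, z ∈ N ⊔ I ^ t • ⊤) : z ∈ N := by
  rw [← N.ker_mkQ, LinearMap.mem_ker, ← Submodule.mem_bot R,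
    ← I.iInf_pow_smul_eq_bot_of_isLocalRing hI, Submodule.mem_iInf]
  intro t
  simpa only [Submodule.map_sup, Submodule.mkQ_map_self, bot_sup_eq, Submodule.map_smul'',
    Submodule.map_top, Submodule.range_mkQ] using Submodule.mem_map_of_mem (f := N.mkQ) (h t)

namespace ParamDecomp

variable {R : Type*} [CommRing R] {s : ℕ}

theorem setOf_val_lt_succ {r : ℕ} (hr : r < s) :
    {j : Fin s | (j : ℕ) < r + 1} = insert ⟨r, hr⟩ {j : Fin s | (j : ℕ) < r} := by
  ext j
  simp only [Set.mem_ofPred_eq, Set.mem_insert_iff, Fin.ext_iff]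
  omega

theorem sum_filter_val_lt_succ (β : Fin s → ℕ) {r : ℕ} (hr : r < s) :
    ∑ j : Fin s with j.val < r + 1, β j = β ⟨r, hr⟩ + ∑ j : Fin s with j.val < r, β j := by
  rw [← Finset.sum_insert (by simp)]
  congr 1
  ext j
  simp only [Finset.mem_filter, Finset.mem_univ, true_and, Finset.mem_insert, Fin.ext_iff]
  omega

/-- `(y₁, …, y_r)`; the indices of `Fin s` start at `0`. -/
def prefixSpan (y : Fin s → R) (r : ℕ) : Ideal R :=
  Ideal.span (y '' {j : Fin s | (j : ℕ) < r})

/-- `(y₁^{β₁}, …, y_r^{β_r})`. -/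
def prefixPowSpan (y : Fin s → R) (r : ℕ) (β : Fin s → ℕ) : Ideal R :=
  Ideal.span ((fun j => y j ^ β j) '' {j : Fin s | (j : ℕ) < r})

theorem prefixSpan_succ (y : Fin s → R) {r : ℕ} (hr : r < s) :
    prefixSpan y (r + 1) = prefixSpan y r ⊔ Ideal.span {y ⟨r, hr⟩} := by
  rw [prefixSpan, setOf_val_lt_succ hr, Set.image_insert_eq, Ideal.span_insert, sup_comm,
    prefixSpan]

theorem prefixPowSpan_mono_right (y : Fin s → R) {r r' : ℕ} (h : r ≤ r') (β : Fin s → ℕ) :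
    prefixPowSpan y r β ≤ prefixPowSpan y r' β :=
  Ideal.span_mono (Set.image_mono fun j (hj : (j : ℕ) < r) => show (j : ℕ) < r' by omega)

theorem pow_mem_prefixPowSpan (y : Fin s → R) {r : ℕ} (hr : r < s) (β : Fin s → ℕ) {t : ℕ}
    (ht : β ⟨r, hr⟩ ≤ t) : y ⟨r, hr⟩ ^ t ∈ prefixPowSpan y (r + 1) β :=
  Ideal.mem_of_dvd _ (pow_dvd_pow _ ht)
    (Ideal.subset_span ⟨⟨r, hr⟩, show r < r + 1 by omega, rfl⟩)

/-- Pigeonhole: a product of `n` of the `y_j` is divisible by some `y_j^{β_j}`. -/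
theorem prefixSpan_pow_le_prefixPowSpan (y : Fin s → R) {r n : ℕ} (hrs : r ≤ s) (hn : 1 ≤ n)
    {β : Fin s → ℕ} (hβ : ∀ j : Fin s, (j : ℕ) < r → 1 ≤ β j)
    (hsum : ∑ j : Fin s with j.val < r, β j ≤ r + n - 1) :
    prefixSpan y r ^ n ≤ prefixPowSpan y r β := by
  classical
  set t : Finset (Fin s) := {j : Fin s | (j : ℕ) < r}
  have ht : (t : Set (Fin s)) = {j : Fin s | (j : ℕ) < r} := by simp [t]
  have hγ : ∀ j ∈ t, β j - 1 + 1 = β j := fun j hj => by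
    have := hβ j (by simpa [t] using hj)
    omega
  have hγsum : ∑ j ∈ t, (β j - 1) + 1 ≤ n := by
    have hcard : t.card = r := by simp [t, Fin.card_filter_val_lt, hrs]
    have := Finset.sum_tsub_distrib t (f := β) (g := fun _ => 1)
      fun j hj => hβ j (by simpa [t] using hj)
    simp only [Finset.sum_const, smul_eq_mul, mul_one, hcard] at this
    omega
  calc prefixSpan y r ^ n ≤ prefixSpan y r ^ (∑ j ∈ t, (β j - 1) + 1) :=
        Ideal.pow_le_pow_right hγsum
    _ ≤ Ideal.span ((fun j => y j ^ (β j - 1 + 1)) '' t) := by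
        rw [prefixSpan, ← ht]
        exact Ideal.span_image_pow_sum_le t y _
    _ = prefixPowSpan y r β := by
        rw [prefixPowSpan, ← ht, Set.image_congr fun j hj => by rw [hγ j hj]]

section Module

variable (M : Type*) [AddCommGroup M] [Module R M]

/-- `⋂ (y₁^{β₁}, …, y_r^{β_r}) M` over `β ≥ 1` with `β₁ + ⋯ + β_r ≤ r + n - 1`. Allowing `≤`
where `Λ_{r,n}` has `=` does not change the intersection, since raising an exponent shrinks the
ideal, but spares rebalancing exponents. -/
def paramInf (y : Fin s → R) (r n : ℕ) : Submodule R M :=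
  ⨅ (β : Fin s → ℕ) (_ : ∀ j : Fin s, (j : ℕ) < r → 1 ≤ β j)
    (_ : ∑ j : Fin s with j.val < r, β j ≤ r + n - 1), prefixPowSpan y r β • ⊤

variable {M}

theorem mem_paramInf {y : Fin s → R} {r n : ℕ} {z : M} :
    z ∈ paramInf M y r n ↔ ∀ β : Fin s → ℕ, (∀ j : Fin s, (j : ℕ) < r → 1 ≤ β j) →
      ∑ j : Fin s with j.val < r, β j ≤ r + n - 1 →
        z ∈ prefixPowSpan y r β • (⊤ : Submodule R M) := by
  simp only [paramInf, Submodule.mem_iInf]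

theorem prefixSpan_pow_smul_le_paramInf (y : Fin s → R) {r n : ℕ} (hrs : r ≤ s) (hn : 1 ≤ n) :
    prefixSpan y r ^ n • ⊤ ≤ paramInf M y r n := fun _ hz =>
  mem_paramInf.2 fun _ hβ hsum =>
    Submodule.smul_mono_left (prefixSpan_pow_le_prefixPowSpan y hrs hn hβ hsum) hz

theorem span_pow_smul_inf_paramInf_le (y : Fin s → R) {r : ℕ} (hr : r < s) (n t : ℕ) :
    Ideal.span {y ⟨r, hr⟩ ^ t} • ⊤ ⊓ paramInf M y r n ≤ paramInf M y (r + 1) (n + t) := by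
  rintro z ⟨hzt, hz⟩
  refine mem_paramInf.2 fun β hβ hsum => ?_
  rw [sum_filter_val_lt_succ β hr] at hsum
  by_cases hβr : β ⟨r, hr⟩ ≤ t
  · exact Submodule.smul_mono_left
      (Ideal.span_singleton_le_iff_mem _ |>.2 (pow_mem_prefixPowSpan y hr β hβr)) hzt
  · exact Submodule.smul_mono_left (prefixPowSpan_mono_right y r.le_succ β)
      (mem_paramInf.1 hz β (fun j hj => hβ j (by omega)) (by omega))

theorem paramInf_le_of_hasParamDecomp {y : Fin s → R} (hdec : HasParamDecomp R M y) {n : ℕ}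
    (hn : 1 ≤ n) : paramInf M y s n ≤ prefixSpan y s ^ n • ⊤ := by
  have hall : {j : Fin s | (j : ℕ) < s} = Set.univ := Set.eq_univ_of_forall Fin.isLt
  intro z hz
  rw [prefixSpan, hall, Set.image_univ, hdec n hn]
  simp only [Submodule.mem_iInf]
  intro α hα
  have := mem_paramInf.1 hz α (fun j _ => hα.1 j) (by simpa using hα.2.le)
  rwa [prefixPowSpan, hall, Set.image_univ] at this

theorem mem_prefixSpan_pow_smul_sup_of_mem_paramInf {y : Fin s → R} {r n : ℕ} (hr : r < s)
    (hn : 1 ≤ n) (ih : ∀ n, 1 ≤ n → paramInf M y (r + 1) n ≤ prefixSpan y (r + 1) ^ n • ⊤)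
    {z : M} (hz : z ∈ paramInf M y r n) (t : ℕ) :
    z ∈ prefixSpan y r ^ n • ⊤ ⊔ Ideal.span {y ⟨r, hr⟩} ^ t • (⊤ : Submodule R M) := by
  induction t with
  | zero => simp
  | succ t iht =>
    obtain ⟨a, ha, b, hb, rfl⟩ := Submodule.mem_sup.1 iht
    have hb_inf : b ∈ paramInf M y r n := by
      simpa using sub_mem hz (prefixSpan_pow_smul_le_paramInf y hr.le hn ha)
    rw [Ideal.span_singleton_pow] at hb
    have hb_succ := ih (n + t) (by omega) (span_pow_smul_inf_paramInf_le y hr n t ⟨hb, hb_inf⟩)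
    obtain ⟨n, rfl⟩ := Nat.exists_eq_add_of_le' hn
    rw [prefixSpan_succ y hr, Nat.add_right_comm] at hb_succ
    refine add_mem (Submodule.mem_sup_left ha) ?_
    rw [← Submodule.sup_smul]
    exact Submodule.smul_mono_left (Ideal.sup_pow_add_add_one_le _ _ n t) hb_succ

end Module

theorem paramInf_le_prefixSpan_pow_smul [IsLocalRing R] [IsNoetherianRing R] {M : Type*}
    [AddCommGroup M] [Module R M] [Module.Finite R M] {y : Fin s → R}
    (hy : ∀ i, y i ∈ maximalIdeal R) (hdec : HasParamDecomp R M y) {r : ℕ} (hrs : r ≤ s) :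
    ∀ n, 1 ≤ n → paramInf M y r n ≤ prefixSpan y r ^ n • ⊤ := by
  induction hrs using Nat.decreasingInduction with
  | self => exact fun n hn => paramInf_le_of_hasParamDecomp hdec hn
  | of_succ r hr ih =>
    intro n hn z hz
    exact Submodule.mem_of_forall_mem_sup_pow_smul
      (Ideal.span_singleton_ne_top ((mem_maximalIdeal _).1 (hy _)))
      (mem_prefixSpan_pow_smul_sup_of_mem_paramInf hr hn ih hz)

end ParamDecomp

open ParamDecomp in
theorem stmt_9_general {R : Type*} [CommRing R] [IsLocalRing R] [IsNoetherianRing R]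
    {M : Type*} [AddCommGroup M] [Module R M] [Module.Finite R M]
    {s : ℕ} (y : Fin s → R) (hy : ∀ i, y i ∈ maximalIdeal R)
    (hdec : HasParamDecomp R M y) :
    ∀ (i : ℕ) (hi : i < s) (k m : ℕ), 1 ≤ k → 1 ≤ m →
      (Ideal.span {y ⟨i, hi⟩ ^ k} • (⊤ : Submodule R M)) ⊓
          ((Ideal.span {r : R | ∃ j : Fin s, (j : ℕ) < i ∧ r = y j}) ^ m •
            (⊤ : Submodule R M)) ≤
        (Ideal.span {r : R | ∃ j : Fin s, (j : ℕ) < i + 1 ∧ r = y j}) ^ (k + m) •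
          (⊤ : Submodule R M) := by
  intro i hi k m _ hm
  have hspan (c : ℕ) :
      Ideal.span {r : R | ∃ j : Fin s, (j : ℕ) < c ∧ r = y j} = prefixSpan y c := by
    rw [prefixSpan]
    congr 1
    ext
    simp [eq_comm]
  rw [hspan, hspan, add_comm k m]
  calc _ ≤ Ideal.span {y ⟨i, hi⟩ ^ k} • ⊤ ⊓ paramInf M y i m :=
        inf_le_inf_left _ (prefixSpan_pow_smul_le_paramInf y hi.le hm)
    _ ≤ paramInf M y (i + 1) (m + k) := span_pow_smul_inf_paramInf_le y hi m k
    _ ≤ _ := paramInf_le_prefixSpan_pow_smul hy hdec hi (m + k) (by omega)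

/-- **Lemma 3.2 (ii).** If `y₁,…,y_s` in `𝔪` has the property of parametric
decomposition, then `y_{i+1}^k M ∩ (y₁,…,y_i)^m M ⊆ (y₁,…,y_{i+1})^{k+m} M` for all
`k, m ≥ 1` and `i < s`. -/
theorem stmt_9 {R : Type*} [CommRing R] [IsLocalRing R] [IsNoetherianRing R]
    {M : Type*} [AddCommGroup M] [Module R M] [Module.Finite R M]
    {s : ℕ} (hs : 1 ≤ s) (y : Fin s → R) (hy : ∀ i, y i ∈ maximalIdeal R)
    (hdec : HasParamDecomp R M y) :
    ∀ (i : ℕ) (hi : i < s) (k m : ℕ), 1 ≤ k → 1 ≤ m →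
      (Ideal.span {y ⟨i, hi⟩ ^ k} • (⊤ : Submodule R M)) ⊓
          ((Ideal.span {r : R | ∃ j : Fin s, (j : ℕ) < i ∧ r = y j}) ^ m •
            (⊤ : Submodule R M)) ≤
        (Ideal.span {r : R | ∃ j : Fin s, (j : ℕ) < i + 1 ∧ r = y j}) ^ (k + m) •
          (⊤ : Submodule R M) :=
  stmt_9_general y hy hdec
end

section
/- Let (R, 𝔪) be a commutative Noetherian local ring, M a finitely generated R-module, s a positive integer, and y_1, …, y_s elements of 𝔪 such that (y_1,…,y_s)^n M = ⋂_{(α_1,…,α_s) ∈ Λ_{s,n}} (y_1^{α_1},…,y_s^{α_s})M for all n ≥ 1. Then y_{i+1}^k M ∩ (y_1,…,y_i)^m M ⊆ y_{i+1}^k (y_1,…,y_i,y_{i+1})M + (y_1,…,y_i)^{m+1} M for all k, m ≥ 1 and all 1 ≤ i < s. -/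
open IsLocalRing

/-!
Write `q = (y₁,…,y_{r+1})` and `q' = (y₁,…,y_r)`. Parametric decomposition passes from `q` to
`q'`: if `D` is the intersection for `q'` in degree `n`, then `D ∩ y_{r+1}^p M ⊆ q^{n+p} M`, and
expanding `(q' + (y_{r+1}))^{n+p}` gives `q^{n+p} ⊆ q'^n + (y_{r+1}^{p+1})`. Since `q'^n M ⊆ D`,
the modular law yields `D ⊆ q'^n M + y_{r+1}^p M` for every `p`, and Krull's intersection theorem
gives `D = q'^n M`. For the last element `y = y_{r+1}` of a sequence with parametric
decomposition, `y^k M ∩ q'^m M ⊆ q^{m+k} M`, because each ideal of the intersection contains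
either `y^k` or, by pigeonhole, `q'^m`; and `q^{m+k} ⊆ q'^{m+1} + y^k q^m` by the same expansion.
-/
namespace Ideal

variable {R : Type*} [CommSemiring R]

theorem sup_pow_add_le_pow_succ_sup_mul (I J : Ideal R) (a b : ℕ) :
    (I ⊔ J) ^ (a + b) ≤ I ^ (a + 1) ⊔ J ^ b * (I ⊔ J) ^ a := by
  rw [← Ideal.add_eq_sup, add_pow, Ideal.sum_eq_sup, Ideal.add_eq_sup]
  refine Finset.sup_le fun i _ => ?_
  by_cases hai : a + 1 ≤ i
  · exact Ideal.mul_le_left.trans (Ideal.mul_le_left.trans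
      ((Ideal.pow_le_pow_right hai).trans le_sup_left))
  · have hia : i ≤ a := by omega
    calc _ ≤ I ^ i * J ^ (a + b - i) := Ideal.mul_le_left
      _ = J ^ b * (I ^ i * J ^ (a - i)) := by
        rw [show a + b - i = b + (a - i) by omega, pow_add]; ring
      _ ≤ J ^ b * ((I ⊔ J) ^ i * (I ⊔ J) ^ (a - i)) := by
        gcongr
        exacts [le_sup_left, le_sup_right]
      _ = J ^ b * (I ⊔ J) ^ a := by rw [← pow_add, Nat.add_sub_cancel' hia]
      _ ≤ _ := le_sup_right

theorem pow_span_image_le_span_image_pow {ι : Type*} (z : ι → R) (α : ι → ℕ) (s : Finset ι)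
    (hα : ∀ i ∈ s, 1 ≤ α i) {n : ℕ} (hn : 1 ≤ n) (hsum : ∑ i ∈ s, α i ≤ s.card + n - 1) :
    span (z '' s) ^ n ≤ span ((fun i => z i ^ α i) '' s) := by
  classical
  induction s using Finset.induction generalizing n with
  | empty => simp [Nat.one_le_iff_ne_zero.mp hn]
  | insert a s ha ih =>
    rw [Finset.sum_insert ha, Finset.card_insert_of_notMem ha] at hsum
    have hs : s.card ≤ ∑ i ∈ s, α i := by
      simpa using Finset.sum_le_sum fun i hi => hα i (Finset.mem_insert_of_mem hi)
    have key := sup_pow_add_le_pow_succ_sup_mul (span (z '' s)) (span {z a}) (n - α a) (α a)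
    rw [Nat.sub_add_cancel (by omega)] at key
    simp only [Finset.coe_insert, Set.image_insert_eq, span_insert, sup_comm (span {_})]
    refine key.trans (sup_le_sup (ih (fun i hi => hα i (Finset.mem_insert_of_mem hi))
      (by omega) (by omega)) ?_)
    rw [span_singleton_pow]
    exact Ideal.mul_le_left

theorem pow_span_range_le_span_range_pow {ι : Type*} [Fintype ι] (z : ι → R) (α : ι → ℕ)
    (hα : ∀ i, 1 ≤ α i) {n : ℕ} (hn : 1 ≤ n) (hsum : ∑ i, α i ≤ Fintype.card ι + n - 1) :
    span (Set.range z) ^ n ≤ span (Set.range fun i => z i ^ α i) := by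
  have := pow_span_image_le_span_image_pow z α Finset.univ (fun i _ => hα i) hn hsum
  simpa only [Finset.coe_univ, Set.image_univ] using this

theorem span_range_pow_le_of_le {ι : Type*} (z : ι → R) {α β : ι → ℕ} (h : β ≤ α) :
    span (Set.range fun i => z i ^ α i) ≤ span (Set.range fun i => z i ^ β i) := by
  rw [span_le]
  rintro _ ⟨i, rfl⟩
  show z i ^ α i ∈ _
  rw [← Nat.add_sub_cancel' (h i), pow_add]
  exact mul_mem_right _ _ (subset_span ⟨i, rfl⟩)

theorem span_range_eq_span_range_castSucc_sup {r : ℕ} (z : Fin (r + 1) → R) :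
    span (Set.range z) = span (Set.range (z ∘ Fin.castSucc)) ⊔ span {z (Fin.last r)} := by
  conv_lhs => rw [← Fin.snoc_init_self z, Fin.range_snoc, span_insert, sup_comm]
  rfl

end Ideal

theorem Lambda.exists_ge {r n : ℕ} (hr : 1 ≤ r) {β : Fin r → ℕ} (hβ : ∀ i, 1 ≤ β i)
    (hsum : ∑ i, β i ≤ r + n - 1) : ∃ α ∈ Lambda r n, β ≤ α := by
  refine ⟨β + Pi.single ⟨0, hr⟩ (r + n - 1 - ∑ i, β i), ⟨fun i => ?_, ?_⟩, le_self_add⟩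
  · exact (hβ i).trans le_self_add
  · simp only [Pi.add_apply]
    rw [Finset.sum_add_distrib, Finset.sum_pi_single']
    simp only [Finset.mem_univ, if_true]
    omega

theorem Lambda.last_le_or_sum_castSucc_le {r n p : ℕ} {β : Fin (r + 1) → ℕ}
    (hβ : β ∈ Lambda (r + 1) (n + p)) :
    β (Fin.last r) ≤ p ∨ ∑ i : Fin r, β i.castSucc ≤ r + n - 1 := by
  have := hβ.2
  rw [Fin.sum_univ_castSucc] at this
  omega

theorem le_sup_of_inf_le_sup_succ {α : Type*} [Lattice α] [IsModularLattice α] {D Q : α}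
    {B : ℕ → α} (hQ : Q ≤ D) (h0 : D ≤ B 0) (hstep : ∀ p, D ⊓ B p ≤ Q ⊔ B (p + 1)) :
    ∀ p, D ≤ Q ⊔ B p
  | 0 => le_sup_of_le_right h0
  | p + 1 => calc
      D = (Q ⊔ B p) ⊓ D := (inf_eq_right.mpr (le_sup_of_inf_le_sup_succ hQ h0 hstep p)).symm
      _ = Q ⊔ B p ⊓ D := sup_inf_assoc_of_le _ hQ
      _ ≤ Q ⊔ B (p + 1) := sup_le le_sup_left ((inf_comm _ _).trans_le (hstep p))

theorem Submodule.le_of_forall_le_sup_pow_smul {R M : Type*} [CommRing R] [IsLocalRing R]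
    [IsNoetherianRing R] [AddCommGroup M] [Module R M] [Module.Finite R M] {N P : Submodule R M}
    (h : ∀ p, P ≤ N ⊔ maximalIdeal R ^ p • ⊤) : P ≤ N := by
  intro x hx
  rw [← Submodule.Quotient.mk_eq_zero, ← Submodule.mem_bot R,
    ← (maximalIdeal R).iInf_pow_smul_eq_bot_of_isLocalRing (maximalIdeal.isMaximal R).ne_top,
    Submodule.mem_iInf]
  intro p
  have := Submodule.mem_map_of_mem (f := N.mkQ) (h p hx)
  rwa [Submodule.map_sup, Submodule.mkQ_map_self, bot_sup_eq, Submodule.map_smul'',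
    Submodule.map_top, Submodule.range_mkQ] at this

namespace HasParamDecomp

open Ideal

variable {R M : Type*} [CommRing R] [AddCommGroup M] [Module R M]

theorem inf_le_smul_pow {r : ℕ} {z : Fin (r + 1) → R} (hd : HasParamDecomp R M z)
    {n p : ℕ} (hn : 1 ≤ n) {P : Submodule R M}
    (hP : ∀ α ∈ Lambda (r + 1) (n + p), ∑ i : Fin r, α i.castSucc ≤ r + n - 1 →
      P ≤ span (Set.range fun i => z i ^ α i) • ⊤) :
    span {z (Fin.last r) ^ p} • ⊤ ⊓ P ≤ span (Set.range z) ^ (n + p) • ⊤ := by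
  rw [hd (n + p) (by omega)]
  refine le_iInf₂ fun α hα => ?_
  rcases Lambda.last_le_or_sum_castSucc_le hα with hlast | hsum
  · refine inf_le_left.trans (Submodule.smul_mono_left (span_le.mpr ?_))
    rw [Set.singleton_subset_iff, ← Nat.add_sub_cancel' hlast, pow_add]
    exact mul_mem_right _ _ (subset_span ⟨Fin.last r, rfl⟩)
  · exact inf_le_right.trans (hP α hα hsum)

theorem castSucc [IsLocalRing R] [IsNoetherianRing R] [Module.Finite R M] {r : ℕ} (hr : 1 ≤ r)
    {z : Fin (r + 1) → R} (hz : z (Fin.last r) ∈ maximalIdeal R) (hd : HasParamDecomp R M z) :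
    HasParamDecomp R M (z ∘ Fin.castSucc) := by
  intro n hn
  set q' := span (Set.range (z ∘ Fin.castSucc))
  set D := ⨅ α ∈ Lambda r n,
    span (Set.range fun i => (z ∘ Fin.castSucc) i ^ α i) • (⊤ : Submodule R M)
  set B : ℕ → Submodule R M := fun p => span {z (Fin.last r) ^ p} • ⊤
  have hQD : q' ^ n • ⊤ ≤ D := le_iInf₂ fun α hα => Submodule.smul_mono_left <|
    pow_span_range_le_span_range_pow _ α hα.1 hn (by rw [Fintype.card_fin, hα.2])
  have hstep (p : ℕ) : D ⊓ B p ≤ q' ^ n • ⊤ ⊔ B (p + 1) := calc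
    D ⊓ B p ≤ span (Set.range z) ^ (n + p) • ⊤ := by
      rw [inf_comm]
      refine hd.inf_le_smul_pow hn fun α hα hsum => ?_
      obtain ⟨β, hβ, hle⟩ := Lambda.exists_ge hr (fun i => hα.1 i.castSucc) hsum
      refine (iInf₂_le β hβ).trans (Submodule.smul_mono_left ?_)
      exact (span_range_pow_le_of_le _ hle).trans
        (span_mono (Set.range_comp_subset_range Fin.castSucc fun i => z i ^ α i))
    _ ≤ (q' ^ n ⊔ span {z (Fin.last r)} ^ (p + 1) * span (Set.range z) ^ (n - 1)) • ⊤ := by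
      refine Submodule.smul_mono_left ?_
      have := sup_pow_add_le_pow_succ_sup_mul q' (span {z (Fin.last r)}) (n - 1) (p + 1)
      rwa [Nat.sub_add_cancel hn, ← span_range_eq_span_range_castSucc_sup,
        show n - 1 + (p + 1) = n + p by omega] at this
    _ ≤ q' ^ n • ⊤ ⊔ B (p + 1) := by
      rw [Submodule.sup_smul, span_singleton_pow]
      exact sup_le_sup_left (Submodule.smul_mono_left mul_le_left) _
  refine le_antisymm hQD (Submodule.le_of_forall_le_sup_pow_smul fun p =>
    (le_sup_of_inf_le_sup_succ hQD ?_ hstep p).trans (sup_le_sup_left ?_ _))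
  · simp [B]
  · exact Submodule.smul_mono_left <|
      span_le.mpr <| Set.singleton_subset_iff.mpr (pow_mem_pow hz p)

theorem castLE [IsLocalRing R] [IsNoetherianRing R] [Module.Finite R M] {s : ℕ} {y : Fin s → R}
    (hy : ∀ i, y i ∈ maximalIdeal R) (hd : HasParamDecomp R M y) {t : ℕ} (ht : 1 ≤ t)
    (hts : t ≤ s) : HasParamDecomp R M (y ∘ Fin.castLE hts) := by
  induction hts using Nat.decreasingInduction with
  | self => exact hd
  | of_succ k hks ih => exact castSucc (z := y ∘ Fin.castLE hks) ht (hy _) (ih (by omega))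

theorem last_pow_smul_inf_le {r : ℕ} {z : Fin (r + 1) → R} (hd : HasParamDecomp R M z) (k : ℕ)
    {m : ℕ} (hm : 1 ≤ m) :
    span {z (Fin.last r) ^ k} • ⊤ ⊓ span (Set.range (z ∘ Fin.castSucc)) ^ m • ⊤ ≤
      span {z (Fin.last r) ^ k} • span (Set.range z) • (⊤ : Submodule R M) ⊔
        span (Set.range (z ∘ Fin.castSucc)) ^ (m + 1) • ⊤ := calc
  _ ≤ span (Set.range z) ^ (m + k) • (⊤ : Submodule R M) := by
    refine hd.inf_le_smul_pow hm fun α hα hsum => Submodule.smul_mono_left ?_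
    refine (pow_span_range_le_span_range_pow _ (fun i => α i.castSucc) (fun i => hα.1 _) hm
      (by rwa [Fintype.card_fin])).trans ?_
    exact span_mono (Set.range_comp_subset_range Fin.castSucc fun i => z i ^ α i)
  _ ≤ (span (Set.range (z ∘ Fin.castSucc)) ^ (m + 1) ⊔
        span {z (Fin.last r)} ^ k * span (Set.range z) ^ m) • ⊤ := by
    refine Submodule.smul_mono_left ?_
    rw [span_range_eq_span_range_castSucc_sup z]
    exact sup_pow_add_le_pow_succ_sup_mul _ _ m k
  _ ≤ _ := by
    rw [Submodule.sup_smul, sup_comm, span_singleton_pow, Submodule.mul_smul]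
    exact sup_le_sup_right (Submodule.smul_mono le_rfl (Submodule.smul_mono_left
      (pow_le_self (by omega)))) _

end HasParamDecomp

theorem setOf_exists_val_lt_eq_range_castLE {α : Type*} {s t : ℕ} (y : Fin s → α) (h : t ≤ s) :
    {a | ∃ j : Fin s, (j : ℕ) < t ∧ a = y j} = Set.range (y ∘ Fin.castLE h) := by
  ext a
  constructor
  · rintro ⟨j, hj, rfl⟩
    exact ⟨⟨j, hj⟩, rfl⟩
  · rintro ⟨j, rfl⟩
    exact ⟨Fin.castLE h j, j.isLt, rfl⟩

theorem stmt_10_general {R : Type*} [CommRing R] [IsLocalRing R] [IsNoetherianRing R]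
    {M : Type*} [AddCommGroup M] [Module R M] [Module.Finite R M]
    {s : ℕ} (y : Fin s → R) (hy : ∀ i, y i ∈ maximalIdeal R)
    (hdec : HasParamDecomp R M y) :
    ∀ (i : ℕ) (hi : i < s) (k m : ℕ), 1 ≤ i → 1 ≤ k → 1 ≤ m →
      (Ideal.span {y ⟨i, hi⟩ ^ k} • (⊤ : Submodule R M)) ⊓
          ((Ideal.span {r : R | ∃ j : Fin s, (j : ℕ) < i ∧ r = y j}) ^ m •
            (⊤ : Submodule R M)) ≤
        Ideal.span {y ⟨i, hi⟩ ^ k} •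
            ((Ideal.span {r : R | ∃ j : Fin s, (j : ℕ) < i + 1 ∧ r = y j}) •
              (⊤ : Submodule R M)) ⊔
          (Ideal.span {r : R | ∃ j : Fin s, (j : ℕ) < i ∧ r = y j}) ^ (m + 1) •
            (⊤ : Submodule R M) := by
  intro i hi k m _ _ hm
  rw [setOf_exists_val_lt_eq_range_castLE y hi.le, setOf_exists_val_lt_eq_range_castLE y hi]
  exact (hdec.castLE hy i.succ_pos hi).last_pow_smul_inf_le k hm

/-- **Lemma 3.3.** If `y₁,…,y_s` in `𝔪` has the property of parametric decomposition,
then `y_{i+1}^k M ∩ (y₁,…,y_i)^m M ⊆ y_{i+1}^k(y₁,…,y_{i+1})M + (y₁,…,y_i)^{m+1} M`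
for all `k, m ≥ 1` and `1 ≤ i < s`. -/
theorem stmt_10 {R : Type*} [CommRing R] [IsLocalRing R] [IsNoetherianRing R]
    {M : Type*} [AddCommGroup M] [Module R M] [Module.Finite R M]
    {s : ℕ} (hs : 1 ≤ s) (y : Fin s → R) (hy : ∀ i, y i ∈ maximalIdeal R)
    (hdec : HasParamDecomp R M y) :
    ∀ (i : ℕ) (hi : i < s) (k m : ℕ), 1 ≤ i → 1 ≤ k → 1 ≤ m →
      (Ideal.span {y ⟨i, hi⟩ ^ k} • (⊤ : Submodule R M)) ⊓
          ((Ideal.span {r : R | ∃ j : Fin s, (j : ℕ) < i ∧ r = y j}) ^ m •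
            (⊤ : Submodule R M)) ≤
        Ideal.span {y ⟨i, hi⟩ ^ k} •
            ((Ideal.span {r : R | ∃ j : Fin s, (j : ℕ) < i + 1 ∧ r = y j}) •
              (⊤ : Submodule R M)) ⊔
          (Ideal.span {r : R | ∃ j : Fin s, (j : ℕ) < i ∧ r = y j}) ^ (m + 1) •
            (⊤ : Submodule R M) :=
  stmt_10_general y hy hdec
end

section
/- Let R be a commutative ring, M an R-module, and y_1, …, y_{i+1} elements of R. Then for all integers k, m ≥ 1 one has the inclusion (y_1,…,y_i,y_{i+1})^{k+m} M ⊆ y_{i+1}^k (y_1,…,y_i,y_{i+1})M + (y_1,…,y_i)^{m+1} M. -/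
open IsLocalRing

namespace Ideal

theorem span_range_fin_succ_eq_sup {R : Type*} [Semiring R] {i : ℕ} (y : Fin (i + 1) → R) :
    span (Set.range y) =
      span {r : R | ∃ j : Fin (i + 1), (j : ℕ) < i ∧ r = y j} ⊔ span {y (Fin.last i)} := by
  rw [← span_union]
  congr 1
  ext r
  constructor
  · rintro ⟨j, rfl⟩
    rcases Fin.eq_castSucc_or_eq_last j with ⟨j, rfl⟩ | rfl
    · exact Or.inl ⟨j.castSucc, j.isLt, rfl⟩
    · exact Or.inr rfl
  · rintro (⟨j, -, rfl⟩ | rfl) <;> exact ⟨_, rfl⟩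

/-- In the binomial expansion of `(A + B)^(k+m)`, a term `A^j B^(k+m-j)` with `j ≤ m` still
contains `B^k` times a product of `m` generators, and every other term lies in `A^(m+1)`. -/
theorem sup_pow_add_le_pow_mul_sup_pow_sup_pow {R : Type*} [CommSemiring R] (A B : Ideal R)
    (k m : ℕ) :
    (A ⊔ B) ^ (k + m) ≤ B ^ k * (A ⊔ B) ^ m ⊔ A ^ (m + 1) := by
  rw [← add_eq_sup, add_pow, sum_eq_sup, add_eq_sup]
  refine Finset.sup_le fun j _ => mul_le_left.trans ?_
  by_cases hjm : j ≤ m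
  · refine le_sup_of_le_left ?_
    have hpow : A ^ j * B ^ (m - j) ≤ (A ⊔ B) ^ m := by
      calc A ^ j * B ^ (m - j) ≤ (A ⊔ B) ^ j * (A ⊔ B) ^ (m - j) :=
            mul_le_mul' (pow_right_mono le_sup_left j) (pow_right_mono le_sup_right _)
        _ = (A ⊔ B) ^ m := by rw [← pow_add, Nat.add_sub_cancel' hjm]
    calc A ^ j * B ^ (k + m - j) = B ^ k * (A ^ j * B ^ (m - j)) := by
          rw [Nat.add_sub_assoc hjm, pow_add]; ring
      _ ≤ B ^ k * (A ⊔ B) ^ m := mul_le_mul_right hpow _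
  · exact le_sup_of_le_right (mul_le_left.trans (pow_le_pow_right (by omega)))

end Ideal

theorem stmt_11_general {R : Type*} [CommRing R] {M : Type*} [AddCommGroup M] [Module R M]
    {i : ℕ} (y : Fin (i + 1) → R) (k m : ℕ) (hm : 1 ≤ m) :
    (Ideal.span (Set.range y)) ^ (k + m) • (⊤ : Submodule R M) ≤
      Ideal.span {y (Fin.last i) ^ k} •
          (Ideal.span (Set.range y) • (⊤ : Submodule R M)) ⊔
        (Ideal.span {r : R | ∃ j : Fin (i + 1), (j : ℕ) < i ∧ r = y j}) ^ (m + 1) •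
          (⊤ : Submodule R M) := by
  set A := Ideal.span {r : R | ∃ j : Fin (i + 1), (j : ℕ) < i ∧ r = y j}
  set B := Ideal.span {y (Fin.last i)}
  have key : (A ⊔ B) ^ (k + m) ≤ B ^ k * (A ⊔ B) ⊔ A ^ (m + 1) :=
    (A.sup_pow_add_le_pow_mul_sup_pow_sup_pow B k m).trans
      (sup_le_sup_right (Ideal.mul_mono_right (Ideal.pow_le_self (by omega))) _)
  rw [Ideal.span_range_fin_succ_eq_sup y, ← Ideal.span_singleton_pow, ← Submodule.smul_assoc,
    smul_eq_mul, ← Submodule.sup_smul]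
  exact Submodule.smul_mono_left key

/-- Over any commutative ring, `(y₁,…,y_{i+1})^{k+m} M ⊆
y_{i+1}^k(y₁,…,y_{i+1})M + (y₁,…,y_i)^{m+1} M` for all `k, m ≥ 1`. -/
theorem stmt_11 {R : Type*} [CommRing R] {M : Type*} [AddCommGroup M] [Module R M]
    {i : ℕ} (y : Fin (i + 1) → R) (k m : ℕ) (hk : 1 ≤ k) (hm : 1 ≤ m) :
    (Ideal.span (Set.range y)) ^ (k + m) • (⊤ : Submodule R M) ≤
      Ideal.span {y (Fin.last i) ^ k} •
          (Ideal.span (Set.range y) • (⊤ : Submodule R M)) ⊔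
        (Ideal.span {r : R | ∃ j : Fin (i + 1), (j : ℕ) < i ∧ r = y j}) ^ (m + 1) •
          (⊤ : Submodule R M) :=
  stmt_11_general y k m hm
end

section
/- Let (R, 𝔪) be a commutative Noetherian local ring, M a finitely generated R-module of dimension d, and x_1, …, x_d a system of parameters of M having the property of parametric decomposition. Then for all 1 ≤ i < j ≤ d and all n ≥ 1 one has x_j^n M ∩ (x_1,…,x_i)M ⊆ x_j^n (x_j, x_1,…,x_i)M. -/
open IsLocalRing

/-! Let `q = (x₁,…,x_d)`, `J = (x_l : l ∈ s)`, `C = x_j^n M ∩ JM` and `T = x_j^n J M ⊆ C`.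
A monomial `x^β` of degree `k` is either divisible by some `x_j^n x_l` with `l ∈ s`, and then
lies in `x_j^n J`, or it is *avoiding*; hence `q^k M ⊆ T + A_k M`, with `A_k` spanned by the
avoiding monomials of degree `k`. Parametric decomposition gives `A_k M ∩ C ⊆ q^{k+1} M`: for
`α ∈ Λ_{d,k+1}`, either `x_j^n ∈ q(α)`, or `J ⊆ q(α)`, or `α_j > n` and `α_l ≥ 2` for some
`l ∈ s`; in the last case a monomial of degree `k` outside `q(α)` has `β < α` pointwise, which
forces `β = α - 1`, and that exponent is not avoiding. The modular law then yields
`C ⊆ T + q^k M` for every `k`, and Krull's intersection theorem in `M/T` gives `C ⊆ T`. -/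

section Monomials

variable {R ι : Type*} [CommRing R] [Fintype ι]

def prodPow (x : ι → R) (β : ι → ℕ) : R := ∏ l, x l ^ β l

lemma prodPow_add_single_one [DecidableEq ι] (x : ι → R) (β : ι → ℕ) (l : ι) :
    prodPow x (β + Pi.single l 1) = prodPow x β * x l := by
  simp only [prodPow, Pi.add_apply, pow_add, Finset.prod_mul_distrib]
  congr 1
  rw [Finset.prod_eq_single l] <;> simp_all

lemma pow_dvd_prodPow (x : ι → R) {β : ι → ℕ} {l : ι} {c : ℕ} (h : c ≤ β l) :
    x l ^ c ∣ prodPow x β :=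
  (pow_dvd_pow _ h).trans (Finset.dvd_prod_of_mem _ (Finset.mem_univ l))

lemma pow_mul_pow_dvd_prodPow [DecidableEq ι] (x : ι → R) {β : ι → ℕ} {j l : ι} (hjl : j ≠ l)
    {a b : ℕ} (ha : a ≤ β j) (hb : b ≤ β l) : x j ^ a * x l ^ b ∣ prodPow x β := by
  have hpair : x j ^ β j * x l ^ β l ∣ prodPow x β := by
    rw [← Finset.prod_pair hjl (f := fun l => x l ^ β l)]
    exact Finset.prod_dvd_prod_of_subset _ _ _ (Finset.subset_univ _)
  exact (mul_dvd_mul (pow_dvd_pow _ ha) (pow_dvd_pow _ hb)).trans hpair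

lemma span_range_pow_le_span_prodPow (x : ι → R) (k : ℕ) :
    Ideal.span (Set.range x) ^ k ≤ Ideal.span (prodPow x '' {β | ∑ l, β l = k}) := by
  classical
  induction k with
  | zero =>
    rw [pow_zero, Ideal.one_eq_top, top_le_iff, Ideal.eq_top_iff_one]
    exact Ideal.subset_span ⟨0, by simp [prodPow]⟩
  | succ k ih =>
    rw [pow_succ]
    refine (Ideal.mul_mono_left ih).trans ?_
    rw [Ideal.span_mul_span', Ideal.span_le]
    rintro _ ⟨_, ⟨β, hβ, rfl⟩, _, ⟨l, rfl⟩, rfl⟩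
    refine Ideal.subset_span ⟨β + Pi.single l 1, ?_, prodPow_add_single_one x β l⟩
    simpa [Finset.sum_add_distrib] using hβ

end Monomials

lemma eq_add_one_of_forall_lt_of_sum_eq {ι : Type*} [Fintype ι] {α β : ι → ℕ}
    (hlt : ∀ l, β l < α l) (hsum : ∑ l, α l = ∑ l, β l + Fintype.card ι) :
    ∀ l, α l = β l + 1 := by
  have hle : ∀ l ∈ Finset.univ, β l + 1 ≤ α l := fun l _ => hlt l
  have heq : ∑ l, (β l + 1) = ∑ l, α l := by
    simp [Finset.sum_add_distrib, hsum]
  exact fun l => ((Finset.sum_eq_sum_iff_of_le hle).mp heq l (Finset.mem_univ l)).symm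

theorem le_sup_of_le_sup_of_inf_le {α : Type*} [Lattice α] [IsModularLattice α] {t c : α}
    {a g : ℕ → α} (htc : t ≤ c) (ha : c ≤ a 0) (hag : ∀ k, a k ≤ t ⊔ g k)
    (hga : ∀ k, g k ⊓ c ≤ a (k + 1)) : ∀ k, c ≤ t ⊔ a k := by
  intro k
  induction k with
  | zero => exact le_sup_of_le_right ha
  | succ k ih =>
    have hc : c ≤ (t ⊔ g k) ⊓ c :=
      le_inf (ih.trans (sup_le le_sup_left (hag k))) le_rfl
    rw [sup_inf_assoc_of_le _ htc] at hc
    exact hc.trans (sup_le_sup_left (hga k) t)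

theorem Submodule.iInf_sup_pow_smul_top {R M : Type*} [CommRing R] [IsLocalRing R]
    [IsNoetherianRing R] [AddCommGroup M] [Module R M] [Module.Finite R M] {I : Ideal R}
    (hI : I ≠ ⊤) (N : Submodule R M) : ⨅ k : ℕ, N ⊔ I ^ k • ⊤ = N := by
  have hcomap : ∀ k : ℕ, N ⊔ I ^ k • ⊤ = (I ^ k • ⊤ : Submodule R (M ⧸ N)).comap N.mkQ := by
    intro k
    rw [← N.range_mkQ, ← Submodule.map_top, ← Submodule.map_smul'', Submodule.comap_map_mkQ]
  simp_rw [hcomap, ← Submodule.comap_iInf, Ideal.iInf_pow_smul_eq_bot_of_isLocalRing I hI,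
    Submodule.comap_bot, Submodule.ker_mkQ]

section ParametricDecomposition

variable {R : Type*} [CommRing R] {d : ℕ} (x : Fin d → R) (j : Fin d) (s : Set (Fin d)) (n : ℕ)

def avoidingMonomialIdeal (k : ℕ) : Ideal R :=
  Ideal.span (prodPow x '' {β | ∑ l, β l = k ∧ ¬(n ≤ β j ∧ ∃ l ∈ s, 1 ≤ β l)})

lemma span_range_pow_le_sup_avoidingMonomialIdeal (hj : j ∉ s) (k : ℕ) :
    Ideal.span (Set.range x) ^ k ≤
      Ideal.span {x j ^ n} * Ideal.span (x '' s) ⊔ avoidingMonomialIdeal x j s n k := by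
  classical
  refine (span_range_pow_le_span_prodPow x k).trans (Ideal.span_le.mpr ?_)
  rintro _ ⟨β, hβ, rfl⟩
  by_cases hdiv : n ≤ β j ∧ ∃ l ∈ s, 1 ≤ β l
  · obtain ⟨hnj, l, hl, hl1⟩ := hdiv
    obtain ⟨c, hc⟩ := pow_mul_pow_dvd_prodPow x (fun h : j = l => hj (h ▸ hl)) hnj hl1
    rw [SetLike.mem_coe, hc, pow_one, mul_assoc]
    exact Ideal.mem_sup_left (Ideal.mul_mem_mul (Ideal.mem_span_singleton_self _)
      (Ideal.mul_mem_right _ _ (Ideal.subset_span ⟨l, hl, rfl⟩)))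
  · exact Ideal.mem_sup_right (Ideal.subset_span ⟨β, ⟨hβ, hdiv⟩, rfl⟩)

lemma span_le_or_span_le_or_avoidingMonomialIdeal_le {k : ℕ} {α : Fin d → ℕ}
    (hα : α ∈ Lambda d (k + 1)) :
    Ideal.span {x j ^ n} ≤ Ideal.span (Set.range fun i => x i ^ α i) ∨
      Ideal.span (x '' s) ≤ Ideal.span (Set.range fun i => x i ^ α i) ∨
      avoidingMonomialIdeal x j s n k ≤ Ideal.span (Set.range fun i => x i ^ α i) := by
  obtain ⟨hα1, hαsum⟩ := hα
  have hdvd : ∀ l r, x l ^ α l ∣ r → r ∈ Ideal.span (Set.range fun i => x i ^ α i) :=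
    fun l r h => Ideal.mem_of_dvd _ h (Ideal.subset_span ⟨l, rfl⟩)
  by_cases hαj : α j ≤ n
  · exact Or.inl (Ideal.span_singleton_le_iff_mem _ |>.mpr (hdvd j _ (pow_dvd_pow _ hαj)))
  by_cases hαs : ∀ l ∈ s, α l = 1
  · refine Or.inr (Or.inl (Ideal.span_le.mpr ?_))
    rintro _ ⟨l, hl, rfl⟩
    exact hdvd l _ (by rw [hαs l hl, pow_one])
  push Not at hαs
  obtain ⟨l₀, hl₀, hαl₀⟩ := hαs
  refine Or.inr (Or.inr (Ideal.span_le.mpr ?_))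
  rintro _ ⟨β, ⟨hβ, hβs⟩, rfl⟩
  by_contra hβα
  have hlt : ∀ l, β l < α l := fun l =>
    lt_of_not_ge fun h => hβα (hdvd l _ (pow_dvd_prodPow x h))
  have hsucc := eq_add_one_of_forall_lt_of_sum_eq hlt (by rw [hβ, Fintype.card_fin]; omega)
  exact hβs ⟨by have := hsucc j; omega, l₀, hl₀, by have := hsucc l₀; have := hα1 l₀; omega⟩

variable {M : Type*} [AddCommGroup M] [Module R M]

lemma avoidingMonomialIdeal_smul_inf_le (hdec : HasParamDecomp R M x) (k : ℕ) :
    avoidingMonomialIdeal x j s n k • ⊤ ⊓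
        (Ideal.span {x j ^ n} • ⊤ ⊓ Ideal.span (x '' s) • (⊤ : Submodule R M)) ≤
      Ideal.span (Set.range x) ^ (k + 1) • ⊤ := by
  rw [hdec (k + 1) k.succ_pos]
  refine le_iInf₂ fun α hα => ?_
  rcases span_le_or_span_le_or_avoidingMonomialIdeal_le x j s n hα with h | h | h
  · exact inf_le_right.trans (inf_le_left.trans (Submodule.smul_mono_left h))
  · exact inf_le_right.trans (inf_le_right.trans (Submodule.smul_mono_left h))
  · exact inf_le_left.trans (Submodule.smul_mono_left h)

theorem span_pow_smul_inf_le_of_hasParamDecomp [IsLocalRing R] [IsNoetherianRing R]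
    [Module.Finite R M] (hq : Ideal.span (Set.range x) ≠ ⊤) (hdec : HasParamDecomp R M x)
    (hj : j ∉ s) :
    Ideal.span {x j ^ n} • ⊤ ⊓ Ideal.span (x '' s) • (⊤ : Submodule R M) ≤
      (Ideal.span {x j ^ n} * Ideal.span (x '' s)) • ⊤ := by
  set T : Submodule R M := (Ideal.span {x j ^ n} * Ideal.span (x '' s)) • ⊤
  have hT : T ≤ Ideal.span {x j ^ n} • ⊤ ⊓ Ideal.span (x '' s) • ⊤ :=
    le_inf (Submodule.smul_mono_left Ideal.mul_le_left)
      (Submodule.smul_mono_left Ideal.mul_le_right)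
  have hpow : ∀ k, Ideal.span (Set.range x) ^ k • ⊤ ≤ T ⊔ avoidingMonomialIdeal x j s n k • ⊤ :=
    fun k => (Submodule.smul_mono_left
      (span_range_pow_le_sup_avoidingMonomialIdeal x j s n hj k)).trans (Submodule.sup_smul _ _ _).le
  calc _ ≤ ⨅ k : ℕ, T ⊔ Ideal.span (Set.range x) ^ k • ⊤ :=
        le_iInf (le_sup_of_le_sup_of_inf_le hT (by simp) hpow
          (avoidingMonomialIdeal_smul_inf_le x j s n hdec))
    _ = T := Submodule.iInf_sup_pow_smul_top hq T

end ParametricDecomposition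

theorem stmt_13_general {R : Type*} [CommRing R] [IsLocalRing R] [IsNoetherianRing R]
    {M : Type*} [AddCommGroup M] [Module R M] [Module.Finite R M]
    {d : ℕ}
    (x : Fin d → R) (hx : IsSOP R M x) (hdec : HasParamDecomp R M x) :
    ∀ (i : ℕ) (j : Fin d), 1 ≤ i → i ≤ (j : ℕ) → ∀ n : ℕ, 1 ≤ n →
      (Ideal.span {x j ^ n} • (⊤ : Submodule R M)) ⊓
          (Ideal.span {r : R | ∃ l : Fin d, (l : ℕ) < i ∧ r = x l} •
            (⊤ : Submodule R M)) ≤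
        Ideal.span {x j ^ n} •
          ((Ideal.span {x j} ⊔ Ideal.span {r : R | ∃ l : Fin d, (l : ℕ) < i ∧ r = x l}) •
            (⊤ : Submodule R M)) := by
  intro i j _ hij n _
  have hq : Ideal.span (Set.range x) ≠ ⊤ :=
    ne_top_of_le_ne_top (maximalIdeal.isMaximal R).ne_top
      (Ideal.span_le.mpr (Set.range_subset_iff.mpr hx.1))
  have hs : {r : R | ∃ l : Fin d, (l : ℕ) < i ∧ r = x l} = x '' {l | (l : ℕ) < i} := by
    ext; simp [eq_comm]
  have hj : j ∉ {l : Fin d | (l : ℕ) < i} := by simpa using hij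
  rw [hs]
  refine (span_pow_smul_inf_le_of_hasParamDecomp x j _ n hq hdec hj).trans ?_
  rw [Submodule.mul_smul]
  exact Submodule.smul_mono le_rfl (Submodule.smul_mono_left le_sup_right)

/-- If the system of parameters `x₁,…,x_d` of `M` has the property of parametric
decomposition then `x_j^n M ∩ (x₁,…,x_i)M ⊆ x_j^n(x_j,x₁,…,x_i)M` for `1 ≤ i < j ≤ d`
and all `n ≥ 1`. -/
theorem stmt_13 {R : Type*} [CommRing R] [IsLocalRing R] [IsNoetherianRing R]
    {M : Type*} [AddCommGroup M] [Module R M] [Module.Finite R M]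
    {d : ℕ} (hd : moduleDim R M = (d : WithBot ℕ∞))
    (x : Fin d → R) (hx : IsSOP R M x) (hdec : HasParamDecomp R M x) :
    ∀ (i : ℕ) (j : Fin d), 1 ≤ i → i ≤ (j : ℕ) → ∀ n : ℕ, 1 ≤ n →
      (Ideal.span {x j ^ n} • (⊤ : Submodule R M)) ⊓
          (Ideal.span {r : R | ∃ l : Fin d, (l : ℕ) < i ∧ r = x l} •
            (⊤ : Submodule R M)) ≤
        Ideal.span {x j ^ n} •
          ((Ideal.span {x j} ⊔ Ideal.span {r : R | ∃ l : Fin d, (l : ℕ) < i ∧ r = x l}) •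
            (⊤ : Submodule R M)) :=
  stmt_13_general x hx hdec
end

section
/- Let (R, 𝔪) be a commutative Noetherian local ring, M a finitely generated R-module with dimension filtration D_0 ⊂ D_1 ⊂ ⋯ ⊂ D_t = M and d_i = dim D_i, and let 0 = ⋂_{𝔭 ∈ Ass M} N(𝔭) be a reduced primary decomposition of the zero submodule of M, where N(𝔭) is 𝔭-primary. Then D_i = ⋂_{𝔭 ∈ Ass M, dim(R/𝔭) ≥ d_{i+1}} N(𝔭) for all i = 0, …, t−1. -/
/-!
If `dim R/𝔭 ≥ d_{i+1}`, a nonzero image of `D_i` in the `𝔭`-coprimary module `M/N(𝔭)` would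
have `𝔭` as an associated prime, forcing `dim D_i ≥ dim R/𝔭`; so `D_i ⊆ N(𝔭)`. Conversely the
intersection `E` of these `N(𝔭)` meets the remaining components in `0`, so it is killed by the
annihilators of the remaining quotients `M/N(𝔭)`, whose only minimal primes are the `𝔭` with
`dim R/𝔭 < d_{i+1}`. Thus `dim E < d_{i+1}`, and the maximality of each step of the dimension
filtration puts `E` inside `D_t, …, D_{i+1}` from the top down, hence inside `D_i`.
-/

open IsLocalRing

theorem Order.krullDim_lt_coe_of_subset_iUnion {α ι : Type*} [Preorder α] {S : Set α}
    {U : ι → Set α} (hU : ∀ i, IsUpperSet (U i)) (hS : S ⊆ ⋃ i, U i) {n : ℕ}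
    (hn : ∀ i, Order.krullDim (U i) < n) : Order.krullDim S < n := by
  rw [Order.krullDim_lt_coe_iff]
  intro l
  obtain ⟨i, hi⟩ := Set.mem_iUnion.1 (hS l.head.2)
  -- a chain starting in the upper set `U i` stays in it
  let l' : LTSeries (U i) :=
    ⟨l.length, fun j => ⟨l j, hU i (l.monotone (Fin.zero_le j)) hi⟩, fun j => l.step j⟩
  exact Order.krullDim_lt_coe_iff.1 (hn i) l'

section Ring

variable {R : Type*} [CommRing R]

theorem ringKrullDim_quotient_anti {I J : Ideal R} (h : I ≤ J) :
    ringKrullDim (R ⧸ J) ≤ ringKrullDim (R ⧸ I) :=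
  ringKrullDim_le_of_surjective _ (Ideal.Quotient.factor_surjective h)

theorem ringKrullDim_quotient_lt_coe_of_forall_le {I : Ideal R} {ι : Type*} {f : ι → Ideal R}
    {n : ℕ} (hf : ∀ i, ringKrullDim (R ⧸ f i) < n)
    (hI : ∀ P : Ideal R, P.IsPrime → I ≤ P → ∃ i, f i ≤ P) :
    ringKrullDim (R ⧸ I) < n := by
  rw [ringKrullDim_quotient]
  refine Order.krullDim_lt_coe_of_subset_iUnion
    (U := fun i => PrimeSpectrum.zeroLocus (f i : Set R))
    (fun i P Q hPQ hP => Set.Subset.trans hP hPQ)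
    (fun P hP => Set.mem_iUnion.2 (hI P.asIdeal P.2 hP)) fun i => ?_
  rw [← ringKrullDim_quotient]
  exact hf i

theorem Ideal.IsPrime.exists_le_of_iInf_le {ι : Type*} [Finite ι] {f : ι → Ideal R}
    {P : Ideal R} (hP : P.IsPrime) (h : ⨅ i, f i ≤ P) : ∃ i, f i ≤ P := by
  have := Fintype.ofFinite ι
  rw [← Finset.inf_univ_eq_iInf] at h
  obtain ⟨i, -, hi⟩ := hP.inf_le'.1 h
  exact ⟨i, hi⟩

end Ring

section Module

variable {R : Type*} [CommRing R] {X Y : Type*} [AddCommGroup X] [Module R X]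
  [AddCommGroup Y] [Module R Y]

theorem moduleDim_eq_bot_of_subsingleton [Subsingleton X] : moduleDim R X = ⊥ := by
  have : Subsingleton (R ⧸ Module.annihilator R X) := by
    rw [Ideal.Quotient.subsingleton_iff, Module.annihilator_eq_top_iff]
    infer_instance
  exact ringKrullDim_eq_bot_of_subsingleton

theorem moduleDim_le_of_surjective (f : X →ₗ[R] Y) (hf : Function.Surjective f) :
    moduleDim R Y ≤ moduleDim R X :=
  ringKrullDim_quotient_anti (f.annihilator_le_of_surjective hf)

theorem ringKrullDim_quotient_le_moduleDim {p : Ideal R} (hp : p ∈ associatedPrimes R X) :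
    ringKrullDim (R ⧸ p) ≤ moduleDim R X :=
  ringKrullDim_quotient_anti (Submodule.annihilator_top (R := R) (M := X) ▸ hp.annihilator_le)

variable [IsNoetherianRing R]

theorem exists_mem_associatedPrimes_le_of_annihilator_le [Module.Finite R X] {P : Ideal R}
    (hP : P.IsPrime) (h : Module.annihilator R X ≤ P) : ∃ q ∈ associatedPrimes R X, q ≤ P := by
  obtain ⟨q, hq, hqP⟩ := Ideal.exists_minimalPrimes_le h
  exact ⟨q, Module.associatedPrimes.minimalPrimes_annihilator_subset_associatedPrimes R X hq, hqP⟩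

theorem ringKrullDim_quotient_le_moduleDim_of_ne_zero {p : Ideal R}
    (hX : associatedPrimes R X = {p}) {f : Y →ₗ[R] X} (hf : f ≠ 0) :
    ringKrullDim (R ⧸ p) ≤ moduleDim R Y := by
  have : Nontrivial (LinearMap.range f) :=
    Submodule.nontrivial_iff_ne_bot.2 (LinearMap.range_eq_bot.not.2 hf)
  obtain ⟨q, hq⟩ := associatedPrimes.nonempty R (LinearMap.range f)
  have hqp : q = p := by
    rw [← Set.mem_singleton_iff, ← hX]
    exact hq.map_of_injective _ (Submodule.injective_subtype _)
  exact hqp ▸ (ringKrullDim_quotient_le_moduleDim hq).trans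
    (moduleDim_le_of_surjective _ f.surjective_rangeRestrict)

end Module

section PrimaryDecomposition

variable {R : Type*} [CommRing R] {M : Type*} [AddCommGroup M] [Module R M]
  {ι : Type*} {N : ι → Submodule R M} {P : ι → Ideal R}

theorem le_of_moduleDim_lt_ringKrullDim_quotient [IsNoetherianRing R] {L K : Submodule R M}
    {p : Ideal R} (hK : associatedPrimes R (M ⧸ K) = {p})
    (hL : moduleDim R L < ringKrullDim (R ⧸ p)) : L ≤ K := by
  by_contra hLK
  refine hL.not_ge (ringKrullDim_quotient_le_moduleDim_of_ne_zero hK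
    (f := K.mkQ ∘ₗ L.subtype) fun h => hLK fun x hx => ?_)
  simpa using LinearMap.congr_fun h ⟨x, hx⟩

theorem iInf_annihilator_quotient_le_annihilator_iInf (hN : ⨅ i, N i = ⊥) (Q : ι → Prop) :
    ⨅ i : {i // ¬ Q i}, Module.annihilator R (M ⧸ N i) ≤
      Module.annihilator R ↥(⨅ i, ⨅ _ : Q i, N i) := by
  intro r hr
  rw [Module.mem_annihilator]
  rintro ⟨x, hx⟩
  have hrx : r • x ∈ ⨅ i, N i := by
    refine Submodule.mem_iInf _ |>.2 fun i => ?_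
    by_cases hi : Q i
    · exact (N i).smul_mem r (Submodule.mem_iInf _ |>.1 (Submodule.mem_iInf _ |>.1 hx i) hi)
    · have := Module.mem_annihilator.1 (Submodule.mem_iInf _ |>.1 hr ⟨i, hi⟩)
        (Submodule.Quotient.mk x : M ⧸ N i)
      rwa [← Submodule.Quotient.mk_smul, Submodule.Quotient.mk_eq_zero] at this
  rw [hN, Submodule.mem_bot] at hrx
  exact Subtype.ext hrx

theorem moduleDim_iInf_lt_coe [IsNoetherianRing R] [Module.Finite R M] [Finite ι]
    (hprimary : ∀ i, associatedPrimes R (M ⧸ N i) = {P i}) (hN : ⨅ i, N i = ⊥) (n : ℕ) :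
    moduleDim R ↥(⨅ i, ⨅ _ : (n : WithBot ℕ∞) ≤ ringKrullDim (R ⧸ P i), N i) < n := by
  refine ringKrullDim_quotient_lt_coe_of_forall_le
    (ι := {i // ¬ (n : WithBot ℕ∞) ≤ ringKrullDim (R ⧸ P i)}) (f := fun i => P i)
    (fun i => not_le.1 i.2) fun Q hQ hle => ?_
  obtain ⟨i, hi⟩ :=
    hQ.exists_le_of_iInf_le ((iInf_annihilator_quotient_le_annihilator_iInf hN _).trans hle)
  obtain ⟨q, hq, hqQ⟩ := exists_mem_associatedPrimes_le_of_annihilator_le hQ hi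
  rw [hprimary, Set.mem_singleton_iff] at hq
  exact ⟨i, hq ▸ hqQ⟩

end PrimaryDecomposition

namespace IsDimFiltration

variable {R : Type*} [CommRing R] [IsLocalRing R] {M : Type*} [AddCommGroup M] [Module R M]
  {t : ℕ} {D : Fin (t + 1) → Submodule R M}

theorem moduleDim_mono (hD : IsDimFiltration R M D) : Monotone fun i => moduleDim R ↥(D i) :=
  Fin.monotone_iff_le_succ.2 fun i => (hD.2.2 i).2.1.le

theorem le_castSucc_of_moduleDim_lt (hD : IsDimFiltration R M D) (i : Fin t)
    {L : Submodule R M} (hL : moduleDim R L < moduleDim R ↥(D i.succ)) : L ≤ D i.castSucc := by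
  have hle : ∀ j, i.succ ≤ j → L ≤ D j := by
    intro j
    induction j using Fin.reverseInduction with
    | last => exact fun _ => hD.2.1 ▸ le_top
    | cast j ih =>
      intro hij
      have hij' : i.succ ≤ j.succ := hij.trans (Fin.castSucc_lt_succ (i := j)).le
      exact (hD.2.2 j).2.2 L (ih hij') (hL.trans_le (hD.moduleDim_mono hij'))
  exact (hD.2.2 i).2.2 L (hle i.succ le_rfl) hL

end IsDimFiltration

theorem stmt_15_general {R : Type*} [CommRing R] [IsLocalRing R] [IsNoetherianRing R]
    {M : Type*} [AddCommGroup M] [Module R M] [Module.Finite R M]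
    {t : ℕ} (D : Fin (t + 1) → Submodule R M) (hD : IsDimFiltration R M D)
    (ds : Fin (t + 1) → ℕ)
    (hds : ∀ i, (D i = ⊥ ∧ ds i = 0) ∨ moduleDim R ↥(D i) = (ds i : WithBot ℕ∞))
    (N : {p : Ideal R // p ∈ associatedPrimes R M} → Submodule R M)
    (hprimary : ∀ p, associatedPrimes R (M ⧸ N p) = {p.val})
    (hdecomp : (⨅ p, N p) = ⊥) :
    ∀ i : Fin t, D i.castSucc =
      ⨅ p, ⨅ _ : (ds i.succ : WithBot ℕ∞) ≤ ringKrullDim (R ⧸ p.val), N p := by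
  intro i
  have hdim : moduleDim R ↥(D i.succ) = ds i.succ := by
    refine (hds i.succ).resolve_left fun ⟨hbot, _⟩ => ?_
    have hlt := (hD.2.2 i).2.1
    rw [hbot, moduleDim_eq_bot_of_subsingleton (X := ↥(⊥ : Submodule R M))] at hlt
    exact not_lt_bot hlt
  have : Finite {p : Ideal R // p ∈ associatedPrimes R M} :=
    (associatedPrimes.finite R M).to_subtype
  refine le_antisymm (le_iInf₂ fun p hp => ?_) (hD.le_castSucc_of_moduleDim_lt i ?_)
  · exact le_of_moduleDim_lt_ringKrullDim_quotient (hprimary p)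
      (((hD.2.2 i).2.1.trans_eq hdim).trans_le hp)
  · exact (moduleDim_iInf_lt_coe hprimary hdecomp _).trans_eq hdim.symm

/-- If `0 = ⋂_{𝔭 ∈ Ass M} N(𝔭)` is a reduced primary decomposition of `0` in `M`, then
the dimension filtration is given by `D_i = ⋂_{dim R/𝔭 ≥ d_{i+1}} N(𝔭)`. -/
theorem stmt_15 {R : Type*} [CommRing R] [IsLocalRing R] [IsNoetherianRing R]
    {M : Type*} [AddCommGroup M] [Module R M] [Module.Finite R M]
    {t : ℕ} (D : Fin (t + 1) → Submodule R M) (hD : IsDimFiltration R M D)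
    (ds : Fin (t + 1) → ℕ)
    (hds : ∀ i, (D i = ⊥ ∧ ds i = 0) ∨ moduleDim R ↥(D i) = (ds i : WithBot ℕ∞))
    (N : {p : Ideal R // p ∈ associatedPrimes R M} → Submodule R M)
    (hprimary : ∀ p, associatedPrimes R (M ⧸ N p) = {p.val})
    (hdecomp : (⨅ p, N p) = ⊥)
    (hreduced : ∀ p, (⨅ q, ⨅ _ : q ≠ p, N q) ≠ ⊥) :
    ∀ i : Fin t, D i.castSucc =
      ⨅ p, ⨅ _ : (ds i.succ : WithBot ℕ∞) ≤ ringKrullDim (R ⧸ p.val), N p :=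
  stmt_15_general D hD ds hds N hprimary hdecomp
end
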